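/- Let g(x) = |x|^{−a} with a ∈ [0, 1/2), κ > 0, let J₀(t,x) = (g(x−κt) + g(x+κt))/2 and G_κ(t,x) = (1/2)·1_{|x| ≤ κt}. Then for |x| ≤ κt, the space-time convolution (J₀² ⋆ G_κ²)(t,x) = ∫₀ᵗ∫_ℝ J₀(s,y)² G_κ(t−s, x−y)² dy ds equals (1/(32κ(1−a)²))[(κt−x)^{1−a} + (κt+x)^{1−a}]² + (t/(16(1−2a)))[(κt−x)^{1−2a} + (κt+x)^{1−2a}]. -/

import Mathlib

open Real MeasureTheory

/-- Wave kernel `G_κ(t,x) = (1/2)·1_{|x| ≤ κt}` for `t ≥ 0`, and `0` for `t < 0`. -/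
noncomputable def waveKernel (κ t x : ℝ) : ℝ :=
  if 0 ≤ t ∧ |x| ≤ κ * t then 1 / 2 else 0

/-- `T_κ(t,x) = (t − |x|/(2κ))·1_{|x| ≤ 2κt}`. -/
noncomputable def Tker (κ t x : ℝ) : ℝ :=
  if |x| ≤ 2 * κ * t then t - |x| / (2 * κ) else 0

/-!
In light-cone coordinates `u = y - κs`, `v = y + κs` (Jacobian `2κ`) the integrand becomes
`(g u + g v)² / 16` on the triangle `x - κt ≤ u < v ≤ x + κt`, the constraint `u < v` being `s > 0`.
The integrand is symmetric in `(u, v)`, so the triangle carries half the integral over the square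
`[x - κt, x + κt]²`, which expands into `2 · 2κt · ∫ g² + 2 (∫ g)²`. For `g = |·|^(-a)` both
one-dimensional integrals are explicit because `-2a > -1`.
-/

open Set

section LinearChangeOfVariables

variable {E F : Type*} [NormedAddCommGroup E] [NormedSpace ℝ E] [MeasurableSpace E] [BorelSpace E]
  [FiniteDimensional ℝ E] (μ : Measure E) [μ.IsAddHaarMeasure] [NormedAddCommGroup F]
  {L : E →ₗ[ℝ] E}

theorem LinearMap.map_equivOfDetNeZero_addHaar (hL : LinearMap.det L ≠ 0) :
    Measure.map ((L.equivOfDetNeZero hL).toContinuousLinearEquiv.toHomeomorph.toMeasurableEquiv) μ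
      = ENNReal.ofReal |(LinearMap.det L)⁻¹| • μ :=
  Measure.map_linearMap_addHaar_eq_smul_addHaar μ hL

theorem integral_comp_linearMap [NormedSpace ℝ F] (hL : LinearMap.det L ≠ 0) (f : E → F) :
    ∫ x, f (L x) ∂μ = |(LinearMap.det L)⁻¹| • ∫ x, f x ∂μ := by
  rw [← ENNReal.toReal_ofReal (abs_nonneg (LinearMap.det L)⁻¹), ← integral_smul_measure,
    ← LinearMap.map_equivOfDetNeZero_addHaar μ hL, integral_map_equiv]
  rfl

theorem MeasureTheory.Integrable.comp_linearMap (hL : LinearMap.det L ≠ 0) {f : E → F}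
    (hf : Integrable f μ) : Integrable (fun x => f (L x)) μ := by
  have := hf.smul_measure (c := ENNReal.ofReal |(LinearMap.det L)⁻¹|) ENNReal.ofReal_ne_top
  rwa [← LinearMap.map_equivOfDetNeZero_addHaar μ hL, integrable_map_equiv] at this

end LinearChangeOfVariables

theorem measure_prod_diagonal {α : Type*} [MeasurableSpace α] [MeasurableEq α]
    (μ ν : Measure α) [NullSingletonClass ν] : μ.prod ν (diagonal α) = 0 := by
  refine Measure.measure_prod_null_of_ae_null measurableSet_diagonal
    (Filter.Eventually.of_forall fun x => ?_)
  have : Prod.mk x ⁻¹' diagonal α = {x} := by ext; simp [eq_comm]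
  simp [this]

theorem setIntegral_fst_lt_snd_of_swap_eq {μ : Measure ℝ} [SFinite μ] [NullSingletonClass μ]
    {h : ℝ × ℝ → ℝ} (hint : Integrable h (μ.prod μ)) (hsymm : ∀ p, h p.swap = h p) :
    ∫ p in {p | p.1 < p.2}, h p ∂(μ.prod μ) = (∫ p, h p ∂(μ.prod μ)) / 2 := by
  have hlt : MeasurableSet {p : ℝ × ℝ | p.1 < p.2} :=
    measurableSet_lt measurable_fst measurable_snd
  have hcompl : ({p : ℝ × ℝ | p.1 < p.2}ᶜ : Set (ℝ × ℝ))
      =ᵐ[μ.prod μ] Prod.swap ⁻¹' {p | p.1 < p.2} := by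
    refine ae_eq_set.2 ⟨measure_mono_null ?_ (measure_prod_diagonal μ μ),
      measure_mono_null ?_ (measure_prod_diagonal μ μ)⟩ <;>
    · intro p hp
      simp only [mem_sdiff, mem_compl_iff, mem_ofPred_eq, mem_diagonal_iff, mem_preimage,
        Prod.fst_swap, Prod.snd_swap, not_lt] at hp ⊢
      linarith [hp.1, hp.2]
  have hswap : ∫ p in {p | p.1 < p.2}ᶜ, h p ∂(μ.prod μ)
      = ∫ p in {p | p.1 < p.2}, h p ∂(μ.prod μ) := calc
    _ = ∫ p in Prod.swap ⁻¹' {p | p.1 < p.2}, h p.swap ∂(μ.prod μ) := by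
      simp only [setIntegral_congr_set hcompl, hsymm]
    _ = _ := Measure.measurePreserving_swap.setIntegral_preimage_emb
      MeasurableEquiv.prodComm.measurableEmbedding h _
  linarith [integral_add_compl hlt hint]

section SquareOfSum

variable {α : Type*} [MeasurableSpace α] {μ : Measure α} [IsFiniteMeasure μ] {f : α → ℝ}

theorem MeasureTheory.MemLp.integrable_add_sq_prod (hf : MemLp f 2 μ) :
    Integrable (fun p : α × α => (f p.1 + f p.2) ^ 2) (μ.prod μ) :=
  ((hf.comp_fst μ).add (hf.comp_snd μ)).integrable_sq

theorem integral_add_sq_prod (hf : MemLp f 2 μ) :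
    ∫ p, (f p.1 + f p.2) ^ 2 ∂(μ.prod μ)
      = 2 * μ.real univ * ∫ x, f x ^ 2 ∂μ + 2 * (∫ x, f x ∂μ) ^ 2 := by
  have h1 : Integrable f μ := hf.integrable one_le_two
  have h2 : Integrable (fun x => f x ^ 2) μ := hf.integrable_sq
  have hexp : (fun p : α × α => (f p.1 + f p.2) ^ 2)
      = fun p => (f p.1 ^ 2 + f p.2 ^ 2) + 2 * (f p.1 * f p.2) := by
    ext p; ring
  rw [hexp, integral_add (f := fun p => f p.1 ^ 2 + f p.2 ^ 2)
      ((h2.comp_fst μ).add (h2.comp_snd μ)) ((h1.mul_prod h1).const_mul 2),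
    integral_add (h2.comp_fst μ) (h2.comp_snd μ), integral_const_mul, integral_prod_mul,
    integral_fun_fst (fun x => f x ^ 2), integral_fun_snd (fun x => f x ^ 2)]
  ring

end SquareOfSum

section AbsRpow

variable {p : ℝ}

theorem abs_rpow_sq (u : ℝ) : (|u| ^ p) ^ 2 = |u| ^ (2 * p) := by
  rw [← rpow_mul_natCast (abs_nonneg u), mul_comm]
  norm_num

theorem integral_abs_rpow_of_nonneg (hp : -1 < p) {c : ℝ} (hc : 0 ≤ c) :
    ∫ u in (0 : ℝ)..c, |u| ^ p = c ^ (p + 1) / (p + 1) := by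
  rw [intervalIntegral.integral_congr (g := fun u => u ^ p), integral_rpow (Or.inl hp),
    zero_rpow (by linarith), sub_zero]
  intro u hu
  rw [uIcc_of_le hc] at hu
  simp only [abs_of_nonneg hu.1]

theorem intervalIntegrable_abs_rpow (hp : -1 < p) (c d : ℝ) :
    IntervalIntegrable (fun u => |u| ^ p) volume c d := by
  have of_nonneg : ∀ e, 0 ≤ e → IntervalIntegrable (fun u => |u| ^ p) volume 0 e := fun e he =>
    (intervalIntegral.intervalIntegrable_rpow' hp).congr_uIoo fun u hu => by
      rw [uIoo_of_le he] at hu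
      simp only [abs_of_pos hu.1]
  have from_zero : ∀ e, IntervalIntegrable (fun u => |u| ^ p) volume 0 e := by
    intro e
    rcases le_total 0 e with he | he
    · exact of_nonneg e he
    · simpa using (IntervalIntegrable.iff_comp_neg (by simp)).1 (of_nonneg (-e) (by linarith))
  exact (from_zero c).symm.trans (from_zero d)

theorem integral_Icc_abs_rpow (hp : -1 < p) {A B : ℝ} (hA : A ≤ 0) (hB : 0 ≤ B) :
    ∫ u in Icc A B, |u| ^ p = ((-A) ^ (p + 1) + B ^ (p + 1)) / (p + 1) := by
  have hneg : ∫ u in A..0, |u| ^ p = (-A) ^ (p + 1) / (p + 1) := by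
    have := intervalIntegral.integral_comp_neg (a := A) (b := 0) (fun u => |u| ^ p)
    simp only [abs_neg, neg_zero] at this
    rw [this, integral_abs_rpow_of_nonneg hp (neg_nonneg.2 hA)]
  rw [integral_Icc_eq_integral_Ioc, ← intervalIntegral.integral_of_le (hA.trans hB),
    ← intervalIntegral.integral_add_adjacent_intervals (b := 0)
      (intervalIntegrable_abs_rpow hp A 0) (intervalIntegrable_abs_rpow hp 0 B),
    hneg, integral_abs_rpow_of_nonneg hp hB, add_div]

theorem memLp_two_abs_rpow_neg {a : ℝ} (ha : a < 1 / 2) (A B : ℝ) :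
    MemLp (fun u => |u| ^ (-a)) 2 (volume.restrict (Icc A B)) := by
  rw [memLp_two_iff_integrable_sq (continuous_abs.measurable.pow_const _).aestronglyMeasurable]
  simp_rw [abs_rpow_sq]
  exact (integrableOn_Icc_iff_integrableOn_Ioc (by simp)).2
    ((intervalIntegrable_abs_rpow (by linarith) A B).def'.mono_set Ioc_subset_uIoc)

end AbsRpow

section Triangle

variable {A B : ℝ} {g : ℝ → ℝ}

def triangle (A B : ℝ) : Set (ℝ × ℝ) := {p | p.1 < p.2} ∩ Icc A B ×ˢ Icc A B

theorem measurableSet_triangle (A B : ℝ) : MeasurableSet (triangle A B) :=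
  (measurableSet_lt measurable_fst measurable_snd).inter (measurableSet_Icc.prod measurableSet_Icc)

theorem volume_restrict_Icc_prod_Icc (A B : ℝ) :
    volume.restrict (Icc A B ×ˢ Icc A B)
      = (volume.restrict (Icc A B)).prod (volume.restrict (Icc A B)) := by
  rw [Measure.volume_eq_prod, Measure.prod_restrict]

theorem integrable_indicator_triangle (hg : MemLp g 2 (volume.restrict (Icc A B))) :
    Integrable ((triangle A B).indicator fun p => (g p.1 + g p.2) ^ 2) := by
  rw [integrable_indicator_iff (measurableSet_triangle A B)]
  refine IntegrableOn.mono_set ?_ inter_subset_right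
  rw [IntegrableOn, volume_restrict_Icc_prod_Icc]
  exact hg.integrable_add_sq_prod

theorem integral_indicator_triangle (hAB : A ≤ B) (hg : MemLp g 2 (volume.restrict (Icc A B))) :
    ∫ p, (triangle A B).indicator (fun p => (g p.1 + g p.2) ^ 2) p
      = (B - A) * (∫ u in Icc A B, g u ^ 2) + (∫ u in Icc A B, g u) ^ 2 := by
  rw [integral_indicator (measurableSet_triangle A B), triangle,
    ← Measure.restrict_restrict (measurableSet_lt measurable_fst measurable_snd),
    volume_restrict_Icc_prod_Icc, setIntegral_fst_lt_snd_of_swap_eq hg.integrable_add_sq_prod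
      (fun p => by rw [Prod.fst_swap, Prod.snd_swap, add_comm]),
    integral_add_sq_prod hg, measureReal_restrict_apply_univ, Real.volume_real_Icc_of_le hAB]
  ring

end Triangle

section LightCone

variable {κ t s x y : ℝ}

def lightCone (κ : ℝ) : ℝ × ℝ →ₗ[ℝ] ℝ × ℝ :=
  (LinearMap.snd ℝ ℝ ℝ - κ • LinearMap.fst ℝ ℝ ℝ).prod
    (LinearMap.snd ℝ ℝ ℝ + κ • LinearMap.fst ℝ ℝ ℝ)

@[simp] theorem lightCone_apply (κ : ℝ) (p : ℝ × ℝ) :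
    lightCone κ p = (p.2 - κ * p.1, p.2 + κ * p.1) := rfl

theorem det_lightCone (κ : ℝ) : LinearMap.det (lightCone κ) = -(2 * κ) := by
  rw [← LinearMap.det_toMatrix (Module.Basis.finTwoProd ℝ), Matrix.det_fin_two]
  simp [LinearMap.toMatrix_apply]
  ring

theorem lightCone_mem_triangle_iff (hκ : 0 < κ) :
    lightCone κ (s, y) ∈ triangle (x - κ * t) (x + κ * t)
      ↔ s ∈ Ioc 0 t ∧ 0 ≤ t - s ∧ |x - y| ≤ κ * (t - s) := by
  simp only [triangle, lightCone_apply, mem_inter_iff, mem_ofPred_eq, mem_prod, mem_Icc, mem_Ioc,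
    abs_le]
  constructor
  · rintro ⟨hlt, ⟨hu, -⟩, -, hv⟩
    have hs : 0 < s := by nlinarith
    refine ⟨⟨hs, ?_⟩, ?_, ?_, ?_⟩ <;> nlinarith
  · rintro ⟨⟨hs, -⟩, ht, hl, hr⟩
    refine ⟨?_, ⟨?_, ?_⟩, ?_, ?_⟩ <;> nlinarith

theorem indicator_Ioc_mul_waveKernel_sq (hκ : 0 < κ) (g : ℝ → ℝ) :
    (Ioc 0 t).indicator (fun s => ((g (y - κ * s) + g (y + κ * s)) / 2) ^ 2
        * waveKernel κ (t - s) (x - y) ^ 2) s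
      = (triangle (x - κ * t) (x + κ * t)).indicator (fun p => (g p.1 + g p.2) ^ 2)
          (lightCone κ (s, y)) / 16 := by
  by_cases hT : lightCone κ (s, y) ∈ triangle (x - κ * t) (x + κ * t)
  · obtain ⟨hs, hw⟩ := (lightCone_mem_triangle_iff hκ).1 hT
    rw [indicator_of_mem hs, indicator_of_mem hT, waveKernel, if_pos hw, lightCone_apply]
    ring
  · rw [indicator_of_notMem hT, zero_div]
    by_cases hs : s ∈ Ioc 0 t
    · rw [indicator_of_mem hs, waveKernel,
        if_neg fun hw => hT ((lightCone_mem_triangle_iff hκ).2 ⟨hs, hw⟩)]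
      ring
    · exact indicator_of_notMem hs _

theorem J0_sq_conv_waveKernel_sq_of_memLp (hκ : 0 < κ) (ht : 0 ≤ t) {g : ℝ → ℝ}
    (hg : MemLp g 2 (volume.restrict (Icc (x - κ * t) (x + κ * t)))) :
    ∫ s in (0:ℝ)..t, ∫ y, ((g (y - κ * s) + g (y + κ * s)) / 2) ^ 2
        * waveKernel κ (t - s) (x - y) ^ 2
      = (t * (∫ u in Icc (x - κ * t) (x + κ * t), g u ^ 2)
          + (∫ u in Icc (x - κ * t) (x + κ * t), g u) ^ 2 / (2 * κ)) / 16 := by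
  rw [intervalIntegral.integral_of_le ht, ← integral_indicator measurableSet_Ioc]
  simp_rw [← integral_indicator₂, indicator_Ioc_mul_waveKernel_sq hκ g]
  have hdet : LinearMap.det (lightCone κ) ≠ 0 := by rw [det_lightCone]; linarith
  have hcomp := ((integrable_indicator_triangle hg).comp_linearMap volume hdet).div_const 16
  rw [Measure.volume_eq_prod] at hcomp
  rw [← integral_prod _ hcomp, ← Measure.volume_eq_prod, integral_div,
    integral_comp_linearMap volume hdet, integral_indicator_triangle (by nlinarith) hg,
    det_lightCone, smul_eq_mul, abs_inv, abs_neg, abs_of_pos (by positivity : 0 < 2 * κ)]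
  field_simp
  ring

end LightCone

theorem J0_sq_conv_waveKernel_sq (κ a t x : ℝ) (hκ : 0 < κ)
    (ha : a < 1 / 2) (hx : |x| ≤ κ * t) :
    ∫ s in (0:ℝ)..t, ∫ y : ℝ,
        ((|y - κ * s| ^ (-a) + |y + κ * s| ^ (-a)) / 2) ^ 2
          * (waveKernel κ (t - s) (x - y)) ^ 2
      = 1 / (32 * κ * (1 - a) ^ 2)
          * ((κ * t - x) ^ (1 - a) + (κ * t + x) ^ (1 - a)) ^ 2
        + t / (16 * (1 - 2 * a))
          * ((κ * t - x) ^ (1 - 2 * a) + (κ * t + x) ^ (1 - 2 * a)) := by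
  obtain ⟨hxl, hxr⟩ := abs_le.1 hx
  have hA : x - κ * t ≤ 0 := by linarith
  have hB : 0 ≤ x + κ * t := by linarith
  have ht : 0 ≤ t := nonneg_of_mul_nonneg_right (by linarith : 0 ≤ κ * t) hκ
  rw [J0_sq_conv_waveKernel_sq_of_memLp (g := fun u => |u| ^ (-a)) hκ ht
    (memLp_two_abs_rpow_neg ha _ _)]
  simp_rw [abs_rpow_sq]
  rw [integral_Icc_abs_rpow (by linarith) hA hB, integral_Icc_abs_rpow (by linarith) hA hB,
    neg_sub, add_comm x, show -a + 1 = 1 - a by ring, show 2 * -a + 1 = 1 - 2 * a by ring]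
  have h1a : 1 - a ≠ 0 := by linarith
  have h12a : 1 - 2 * a ≠ 0 := by linarith
  field_simp
  ring
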